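/- arXiv:2202.06812 — 9 statements merged into one kernel-verified Lean document; each statement's English description precedes it below -/
import Mathlib

section
/- Let H_A and H_B be complex Hilbert spaces and K, K̃ ∈ L(H_A ⊗ H_B) bounded operators. Then (X ⊗ 1)K† + K(X ⊗ 1) = (X ⊗ 1)K̃† + K̃(X ⊗ 1) holds for all X ∈ L(H_A) if and only if there exists a self-adjoint H_B' ∈ L(H_B) such that K̃ = K + i(1 ⊗ H_B'). -/
open Matrix Kronecker

/-- Two operators `K, K̃` on `H_A ⊗ H_B` satisfy
`(X ⊗ 1)K† + K(X ⊗ 1) = (X ⊗ 1)K̃† + K̃(X ⊗ 1)` for all `X ∈ L(H_A)` iff there is a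
self-adjoint `H_B'` with `K̃ = K + i (1 ⊗ H_B')`. -/
theorem stmt_0 {a b : Type*} [Fintype a] [Fintype b] [DecidableEq a] [DecidableEq b]
    (K K' : Matrix (a × b) (a × b) ℂ) :
    (∀ X : Matrix a a ℂ,
        (X ⊗ₖ (1 : Matrix b b ℂ)) * Kᴴ + K * (X ⊗ₖ (1 : Matrix b b ℂ)) =
        (X ⊗ₖ (1 : Matrix b b ℂ)) * K'ᴴ + K' * (X ⊗ₖ (1 : Matrix b b ℂ))) ↔
      ∃ Hb : Matrix b b ℂ, Hbᴴ = Hb ∧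
        K' = K + Complex.I • ((1 : Matrix a a ℂ) ⊗ₖ Hb) := by
  constructor
  · intro h
    set D : Matrix (a × b) (a × b) ℂ := K' - K with hD
    -- D is skew-hermitian
    have hDadj : Dᴴ = -D := by
      have e := h 1
      rw [Matrix.one_kronecker_one] at e
      simp only [one_mul, mul_one] at e
      have h2 : K'ᴴ - Kᴴ = K - K' := by
        rw [sub_eq_sub_iff_add_eq_add, ← e]; abel
      rw [hD, Matrix.conjTranspose_sub, h2]; abel
    -- D commutes with X ⊗ 1
    have hcomm : ∀ X : Matrix a a ℂ,
        (X ⊗ₖ (1 : Matrix b b ℂ)) * D = D * (X ⊗ₖ (1 : Matrix b b ℂ)) := by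
      intro X
      have e := h X
      have hK' : K' = K + D := by rw [hD]; abel
      have hK'H : K'ᴴ = Kᴴ - D := by
        rw [hK', Matrix.conjTranspose_add, hDadj]; abel
      rw [hK'H, hK', mul_sub, add_mul] at e
      have h0 : ((X ⊗ₖ (1 : Matrix b b ℂ)) * Kᴴ - (X ⊗ₖ (1 : Matrix b b ℂ)) * D +
          (K * (X ⊗ₖ (1 : Matrix b b ℂ)) + D * (X ⊗ₖ (1 : Matrix b b ℂ)))) -
          ((X ⊗ₖ (1 : Matrix b b ℂ)) * Kᴴ + K * (X ⊗ₖ (1 : Matrix b b ℂ))) = 0 := by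
        rw [← e]; abel
      have h1 : D * (X ⊗ₖ (1 : Matrix b b ℂ)) - (X ⊗ₖ (1 : Matrix b b ℂ)) * D = 0 := by
        rw [← h0]; abel
      rw [sub_eq_zero] at h1
      exact h1.symm
    -- entrywise consequence with standard basis matrices
    have hentry : ∀ (k l i j : a) (p q : b),
        (if l = j then D (i, p) (k, q) else 0) =
        (if k = i then D (l, p) (j, q) else 0) := by
      intro k l i j p q
      have e := hcomm (Matrix.single k l 1)
      have e2 := congrFun (congrFun e (i, p)) (j, q)
      simp only [Matrix.mul_apply, Matrix.kroneckerMap_apply, Matrix.one_apply,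
        Matrix.single, Matrix.of_apply, Fintype.sum_prod_type] at e2
      simpa [ite_and] using e2.symm
    rcases isEmpty_or_nonempty a with hA | ⟨⟨i0⟩⟩
    · refine ⟨0, by simp, ?_⟩
      ext ⟨i, p⟩ ⟨j, q⟩
      exact (hA.false i).elim
    · refine ⟨(-Complex.I) • Matrix.of (fun p q => D (i0, p) (i0, q)), ?_, ?_⟩
      · ext p q
        have hsk := congrFun (congrFun hDadj (i0, p)) (i0, q)
        simp only [Matrix.conjTranspose_apply, Matrix.neg_apply] at hsk ⊢
        simp only [Matrix.smul_apply, Matrix.of_apply, smul_eq_mul, star_mul',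
          Complex.star_def, map_neg, Complex.conj_I]
        rw [show (starRingEnd ℂ) (D (i0, q) (i0, p)) = star (D (i0, q) (i0, p)) from rfl, hsk]
        ring
      · ext ⟨i, p⟩ ⟨j, q⟩
        have hDval : D (i, p) (j, q) = if i = j then D (i0, p) (i0, q) else 0 := by
          rcases eq_or_ne i j with rfl | hij
          · have e1 := hentry i i0 i i0 p q
            simp at e1
            simp [e1]
          · have e2 := hentry j j i j p q
            simp [hij, Ne.symm hij] at e2
            simp [hij, e2]
        have : K' (i, p) (j, q) = K (i, p) (j, q) + D (i, p) (j, q) := by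
          simp [hD]
        rw [this, hDval]
        simp only [Matrix.add_apply, Matrix.smul_apply, Matrix.kroneckerMap_apply,
          Matrix.one_apply, Matrix.smul_apply, Matrix.of_apply, smul_eq_mul]
        rcases eq_or_ne i j with rfl | hij
        · simp only [if_pos rfl, if_true, mul_one]
          ring_nf
          simp [Complex.I_sq]
        · simp [hij]
  · rintro ⟨Hb, hHb, rfl⟩
    intro X
    have hkH : ((1 : Matrix a a ℂ) ⊗ₖ Hb)ᴴ = (1 : Matrix a a ℂ) ⊗ₖ Hb := by
      ext ⟨i, p⟩ ⟨j, q⟩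
      have := congrFun (congrFun hHb p) q
      simp only [Matrix.conjTranspose_apply] at this ⊢
      simp only [Matrix.kroneckerMap_apply, Matrix.one_apply]
      rcases eq_or_ne i j with rfl | h
      · simpa using this
      · simp [h, Ne.symm h]
    have hswap : (X ⊗ₖ (1 : Matrix b b ℂ)) * ((1 : Matrix a a ℂ) ⊗ₖ Hb) =
        ((1 : Matrix a a ℂ) ⊗ₖ Hb) * (X ⊗ₖ (1 : Matrix b b ℂ)) := by
      rw [← Matrix.mul_kronecker_mul, ← Matrix.mul_kronecker_mul, mul_one, one_mul,
        mul_one, one_mul]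
    rw [Matrix.conjTranspose_add, Matrix.conjTranspose_smul]
    rw [hkH]
    simp only [Complex.star_def, Complex.conj_I, mul_add, add_mul, Matrix.mul_smul,
      Matrix.smul_mul]
    rw [hswap]
    module
end

section
/- Let L : L(H) → L(H) be given by L(X) = Φ(X) − K†X − XK where Φ(X) = V†(X ⊗ 1_E)V, and suppose A ⊆ L(H) is a *-subalgebra. Assume there exist operators A, B ∈ L(H; H ⊗ H_E), V_0 ∈ L(H; H_0 ⊗ H_E) with V = (P_0† ⊗ 1_E)V_0 + A + B, where P_0 is the coisometry onto the null part of A, such that A†(X ⊗ 1_E)A ∈ A and (X ⊗ 1_E)B = BX for all X ∈ A, and K = B†A + (1/2)B†B + K_A + iH' + P_0†K_0 with K_A ∈ A, H' = H'† in the commutant A′, and K_0 ∈ L(H; H_0). Then L(X_A) = A†(X_A ⊗ 1_E)A − K_A†X_A − X_A K_A for every X_A ∈ A; in particular L(A) ⊆ A. -/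
open Matrix Kronecker

lemma kron_one_conjTranspose {m n e : Type*} [DecidableEq e]
    (X : Matrix m n ℂ) :
    (X ⊗ₖ (1 : Matrix e e ℂ))ᴴ = Xᴴ ⊗ₖ (1 : Matrix e e ℂ) := by
  ext ⟨i, j⟩ ⟨k, l⟩
  simp [Matrix.conjTranspose_apply, Matrix.kroneckerMap_apply, Matrix.one_apply,
    apply_ite (star : ℂ → ℂ), eq_comm]

/-- Easy direction of the characterization of GKLS generators leaving a *-algebra invariant:
if `V = (P₀† ⊗ 1)V₀ + A + B` and `K = B†A + ½B†B + K_𝒜 + iH' + P₀†K₀` with the stated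
properties, then `L(X_𝒜) = A†(X_𝒜 ⊗ 1)A − K_𝒜†X_𝒜 − X_𝒜K_𝒜 ∈ 𝒜` for all `X_𝒜 ∈ 𝒜`. -/
theorem stmt_3 {h h0 e : Type*} [Fintype h] [Fintype h0] [Fintype e]
    [DecidableEq h] [DecidableEq h0] [DecidableEq e]
    (𝒜 : NonUnitalStarSubalgebra ℂ (Matrix h h ℂ))
    (P0 : Matrix h0 h ℂ)
    (hP0 : ∀ X ∈ 𝒜, P0 * X = 0 ∧ X * P0ᴴ = 0)
    (V A B : Matrix (h × e) h ℂ) (V0 : Matrix (h0 × e) h ℂ)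
    (K KA H' : Matrix h h ℂ) (K0 : Matrix h0 h ℂ)
    (hV : V = (P0ᴴ ⊗ₖ (1 : Matrix e e ℂ)) * V0 + A + B)
    (hA : ∀ X ∈ 𝒜, Aᴴ * (X ⊗ₖ (1 : Matrix e e ℂ)) * A ∈ 𝒜)
    (hB : ∀ X ∈ 𝒜, (X ⊗ₖ (1 : Matrix e e ℂ)) * B = B * X)
    (hKA : KA ∈ 𝒜) (hH' : H'ᴴ = H')
    (hH'comm : ∀ X ∈ 𝒜, H' * X = X * H')
    (hK : K = Bᴴ * A + (1/2 : ℂ) • (Bᴴ * B) + KA + Complex.I • H' + P0ᴴ * K0)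
    (L : Matrix h h ℂ → Matrix h h ℂ)
    (hL : ∀ X, L X = Vᴴ * (X ⊗ₖ (1 : Matrix e e ℂ)) * V - Kᴴ * X - X * K) :
    ∀ X ∈ 𝒜,
      L X = Aᴴ * (X ⊗ₖ (1 : Matrix e e ℂ)) * A - KAᴴ * X - X * KA ∧ L X ∈ 𝒜 := by
  intro X hX
  obtain ⟨hPX, hXP⟩ := hP0 X hX
  have hXs : Xᴴ ∈ 𝒜 := by
    simpa [Matrix.star_eq_conjTranspose] using star_mem (s := 𝒜) hX
  set Y : Matrix (h × e) (h × e) ℂ := X ⊗ₖ (1 : Matrix e e ℂ) with hY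
  set P : Matrix (h × e) (h0 × e) ℂ := P0ᴴ ⊗ₖ (1 : Matrix e e ℂ) with hP
  have hYP : Y * P = 0 := by
    rw [hY, hP, ← Matrix.mul_kronecker_mul, hXP, Matrix.zero_kronecker]
  have hPY : Pᴴ * Y = 0 := by
    rw [hP, hY, kron_one_conjTranspose, Matrix.conjTranspose_conjTranspose,
      ← Matrix.mul_kronecker_mul, hPX, Matrix.zero_kronecker]
  have hYB : Y * B = B * X := hB X hX
  have hBY : Bᴴ * Y = X * Bᴴ := by
    have h1 := congrArg Matrix.conjTranspose (hB Xᴴ hXs)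
    simpa [Matrix.conjTranspose_mul, kron_one_conjTranspose,
      Matrix.conjTranspose_conjTranspose, hY] using h1
  have hBBX : X * (Bᴴ * B) = Bᴴ * B * X := by
    calc X * (Bᴴ * B) = (X * Bᴴ) * B := by rw [Matrix.mul_assoc]
    _ = Bᴴ * Y * B := by rw [hBY]
    _ = Bᴴ * (B * X) := by rw [Matrix.mul_assoc, hYB]
    _ = Bᴴ * B * X := by rw [Matrix.mul_assoc]
  have e1 : Vᴴ * Y * V
      = Aᴴ * Y * A + Aᴴ * (B * X) + (X * Bᴴ) * A + Bᴴ * B * X := by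
    have hVct : Vᴴ = V0ᴴ * Pᴴ + Aᴴ + Bᴴ := by
      rw [hV]; simp [Matrix.conjTranspose_add, Matrix.conjTranspose_mul]
    have hVY : Vᴴ * Y = (Aᴴ + Bᴴ) * Y := by
      rw [hVct, Matrix.add_mul, Matrix.add_mul, Matrix.mul_assoc, hPY,
        Matrix.mul_zero, zero_add, ← Matrix.add_mul]
    have hYV : Y * V = Y * (A + B) := by
      rw [hV, add_assoc, Matrix.mul_add, ← Matrix.mul_assoc, hYP,
        Matrix.zero_mul, zero_add]
    calc Vᴴ * Y * V = (Aᴴ + Bᴴ) * Y * V := by rw [hVY]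
      _ = (Aᴴ + Bᴴ) * (Y * (A + B)) := by rw [Matrix.mul_assoc, hYV]
      _ = _ := by
          rw [Matrix.mul_add, hYB, Matrix.add_mul, Matrix.mul_add Aᴴ,
            Matrix.mul_add Bᴴ, ← Matrix.mul_assoc Aᴴ Y A,
            ← Matrix.mul_assoc Bᴴ Y A, hBY, ← Matrix.mul_assoc Bᴴ B X]
          abel
  have hKct : Kᴴ = Aᴴ * B + (1/2 : ℂ) • (Bᴴ * B) + KAᴴ
      + (-Complex.I) • H' + K0ᴴ * P0 := by
    rw [hK]
    simp [Matrix.conjTranspose_add, Matrix.conjTranspose_mul,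
      Matrix.conjTranspose_smul, hH', Complex.star_def, Complex.conj_I]
  have e2 : Kᴴ * X = Aᴴ * (B * X) + (1/2 : ℂ) • (Bᴴ * B * X) + KAᴴ * X
      + (-Complex.I) • (X * H') := by
    rw [hKct]
    simp only [Matrix.add_mul, Matrix.smul_mul]
    rw [Matrix.mul_assoc Aᴴ B X, Matrix.mul_assoc K0ᴴ P0 X, hPX, Matrix.mul_zero, add_zero,
      hH'comm X hX]
  have e3 : X * K = (X * Bᴴ) * A + (1/2 : ℂ) • (Bᴴ * B * X) + X * KA
      + Complex.I • (X * H') := by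
    rw [hK]
    simp only [mul_add, Matrix.mul_smul]
    rw [← Matrix.mul_assoc X Bᴴ A, ← Matrix.mul_assoc X P0ᴴ K0, hXP, Matrix.zero_mul, add_zero, hBBX]
  have key : L X = Aᴴ * Y * A - KAᴴ * X - X * KA := by
    rw [hL X, ← hY, e1, e2, e3]
    module
  refine ⟨key, ?_⟩
  rw [key]
  have hKAs : KAᴴ ∈ 𝒜 := by
    simpa [Matrix.star_eq_conjTranspose] using star_mem (s := 𝒜) hKA
  exact sub_mem (sub_mem (hA X hX) (mul_mem hKAs hX)) (mul_mem hX hKA)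
end

section
/- Let Φ ∈ CP_σ(H_A; H_C) be given by Φ(X) = V†(X ⊗ 1_E)V, where V decomposes as V = (P_{0:A}† ⊗ 1_E)V_0 + Σ_{i∈I, j∈J} (P_{i:A}† ⊗ 1_E) V_{ij} P_{j:C}, with V_{ij} = (1_{A_i} ⊗ U_{ij})(A_{ij} ⊗ 1_{D_j}) for operators A_{ij} ∈ L(H_{C_j}; H_{A_i} ⊗ H_{F_{ij}}) and isometries U_{ij} ∈ L(H_{F_{ij}} ⊗ H_{D_j}; H_{B_i} ⊗ H_E) satisfying U_{ik}†U_{il} = δ_{kl}·1. Then Φ(A) ⊆ C, where A = ⊕_i L(H_{A_i}) ⊗ 1_{B_i} and C = ⊕_j L(H_{C_j}) ⊗ 1_{D_j}; explicitly, for X = Σ_i P_{i:A}†(X_{A_i} ⊗ 1_{B_i})P_{i:A} one has Φ(X) = Σ_j P_{j:C}†[(Σ_i A_{ij}†(X_{A_i} ⊗ 1_{F_{ij}})A_{ij}) ⊗ 1_{D_j}]P_{j:C}. -/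
open Matrix Kronecker

section helpers

variable {m n p q m' n' p' : Type*}

private lemma sum_kron {ι : Type*} (t : Finset ι) (f : ι → Matrix m n ℂ) (B : Matrix p q ℂ) :
    (∑ i ∈ t, f i) ⊗ₖ B = ∑ i ∈ t, f i ⊗ₖ B := by
  classical
  induction t using Finset.cons_induction with
  | empty => simp [Matrix.zero_kronecker]
  | cons a t ha ih => rw [Finset.sum_cons, Finset.sum_cons, Matrix.add_kronecker, ih]

private lemma kron_conjT (A : Matrix m n ℂ) (B : Matrix p q ℂ) : (A ⊗ₖ B)ᴴ = Aᴴ ⊗ₖ Bᴴ := by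
  ext ⟨i, j⟩ ⟨k, l⟩
  simp [Matrix.conjTranspose_apply, Matrix.kroneckerMap_apply, mul_comm]

private lemma reindex_mul_reindex [Fintype n] [Fintype n']
    (e₁ : m ≃ m') (e₂ : n ≃ n') (e₃ : p ≃ p') (M : Matrix m n ℂ) (N : Matrix n p ℂ) :
    Matrix.reindex e₁ e₂ M * Matrix.reindex e₂ e₃ N = Matrix.reindex e₁ e₃ (M * N) := by
  simp [Matrix.reindex_apply]

private lemma conjT_reindex (e₁ : m ≃ m') (e₂ : n ≃ n') (M : Matrix m n ℂ) :
    (Matrix.reindex e₁ e₂ M)ᴴ = Matrix.reindex e₂ e₁ Mᴴ := by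
  simp [Matrix.reindex_apply, Matrix.conjTranspose_submatrix]

private lemma kron_one_split [DecidableEq p] [DecidableEq q] (X : Matrix m n ℂ) :
    X ⊗ₖ (1 : Matrix (p × q) (p × q) ℂ) =
      Matrix.reindex (Equiv.prodAssoc m p q) (Equiv.prodAssoc n p q)
        ((X ⊗ₖ (1 : Matrix p p ℂ)) ⊗ₖ (1 : Matrix q q ℂ)) := by
  rw [Matrix.kronecker_assoc, Matrix.one_kronecker_one]

private lemma kron_one_split' [DecidableEq p] [DecidableEq q] (X : Matrix m n ℂ) :
    (X ⊗ₖ (1 : Matrix p p ℂ)) ⊗ₖ (1 : Matrix q q ℂ) =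
      Matrix.reindex (Equiv.prodAssoc m p q).symm (Equiv.prodAssoc n p q).symm
        (X ⊗ₖ (1 : Matrix (p × q) (p × q) ℂ)) := by
  rw [kron_one_split]
  ext ⟨⟨a, b⟩, c⟩ ⟨⟨d, f⟩, g⟩
  simp [Matrix.reindex_apply, Equiv.prodAssoc]

end helpers

section core

variable {α β ε φ δ γ φ' δ' γ' : Type*}
  [Fintype α] [Fintype β] [Fintype ε] [Fintype φ] [Fintype δ] [Fintype γ]
  [Fintype φ'] [Fintype δ'] [Fintype γ']
  [DecidableEq α] [DecidableEq β] [DecidableEq ε] [DecidableEq φ] [DecidableEq δ]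
  [DecidableEq φ'] [DecidableEq δ']

private lemma core_calc (X : Matrix α α ℂ)
    (A1 : Matrix (α × φ) γ ℂ) (A2 : Matrix (α × φ') γ' ℂ)
    (U1 : Matrix (β × ε) (φ × δ) ℂ) (U2 : Matrix (β × ε) (φ' × δ') ℂ)
    (V1 : Matrix ((α × β) × ε) (γ × δ) ℂ) (V2 : Matrix ((α × β) × ε) (γ' × δ') ℂ)
    (hV1 : V1 = Matrix.reindex (Equiv.prodAssoc α β ε).symm (Equiv.refl _)
        ((1 : Matrix α α ℂ) ⊗ₖ U1) *
      Matrix.reindex (Equiv.prodAssoc α φ δ) (Equiv.refl _) (A1 ⊗ₖ (1 : Matrix δ δ ℂ)))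
    (hV2 : V2 = Matrix.reindex (Equiv.prodAssoc α β ε).symm (Equiv.refl _)
        ((1 : Matrix α α ℂ) ⊗ₖ U2) *
      Matrix.reindex (Equiv.prodAssoc α φ' δ') (Equiv.refl _) (A2 ⊗ₖ (1 : Matrix δ' δ' ℂ))) :
    V2ᴴ * (((X ⊗ₖ (1 : Matrix β β ℂ)) ⊗ₖ (1 : Matrix ε ε ℂ)) * V1) =
      Matrix.reindex (Equiv.refl _) (Equiv.prodAssoc α φ' δ') (A2ᴴ ⊗ₖ (1 : Matrix δ' δ' ℂ)) *
        ((X ⊗ₖ (U2ᴴ * U1)) *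
          Matrix.reindex (Equiv.prodAssoc α φ δ) (Equiv.refl _) (A1 ⊗ₖ (1 : Matrix δ δ ℂ))) := by
  subst hV1 hV2
  rw [Matrix.conjTranspose_mul, conjT_reindex, conjT_reindex, kron_conjT,
    Matrix.conjTranspose_one, kron_conjT, Matrix.conjTranspose_one, Matrix.mul_assoc]
  congr 1
  rw [kron_one_split' X,
    ← Matrix.mul_assoc (Matrix.reindex (Equiv.prodAssoc α β ε).symm
      (Equiv.prodAssoc α β ε).symm (X ⊗ₖ (1 : Matrix (β × ε) (β × ε) ℂ))),
    reindex_mul_reindex,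
    ← Matrix.mul_assoc (Matrix.reindex (Equiv.refl _) (Equiv.prodAssoc α β ε).symm
      ((1 : Matrix α α ℂ) ⊗ₖ U2ᴴ)),
    reindex_mul_reindex, Matrix.reindex_refl_refl,
    ← Matrix.mul_kronecker_mul, Matrix.mul_one, Matrix.one_mul,
    ← Matrix.mul_kronecker_mul, Matrix.one_mul]

private lemma core_zero (X : Matrix α α ℂ)
    (A1 : Matrix (α × φ) γ ℂ) (A2 : Matrix (α × φ') γ' ℂ)
    (U1 : Matrix (β × ε) (φ × δ) ℂ) (U2 : Matrix (β × ε) (φ' × δ') ℂ)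
    (V1 : Matrix ((α × β) × ε) (γ × δ) ℂ) (V2 : Matrix ((α × β) × ε) (γ' × δ') ℂ)
    (hV1 : V1 = Matrix.reindex (Equiv.prodAssoc α β ε).symm (Equiv.refl _)
        ((1 : Matrix α α ℂ) ⊗ₖ U1) *
      Matrix.reindex (Equiv.prodAssoc α φ δ) (Equiv.refl _) (A1 ⊗ₖ (1 : Matrix δ δ ℂ)))
    (hV2 : V2 = Matrix.reindex (Equiv.prodAssoc α β ε).symm (Equiv.refl _)
        ((1 : Matrix α α ℂ) ⊗ₖ U2) *
      Matrix.reindex (Equiv.prodAssoc α φ' δ') (Equiv.refl _) (A2 ⊗ₖ (1 : Matrix δ' δ' ℂ)))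
    (hU : U2ᴴ * U1 = 0) :
    V2ᴴ * (((X ⊗ₖ (1 : Matrix β β ℂ)) ⊗ₖ (1 : Matrix ε ε ℂ)) * V1) = 0 := by
  rw [core_calc X A1 A2 U1 U2 V1 V2 hV1 hV2, hU, Matrix.kronecker_zero, Matrix.zero_mul,
    Matrix.mul_zero]

private lemma core_one (X : Matrix α α ℂ)
    (A1 A2 : Matrix (α × φ) γ ℂ)
    (U1 U2 : Matrix (β × ε) (φ × δ) ℂ)
    (V1 V2 : Matrix ((α × β) × ε) (γ × δ) ℂ)
    (hV1 : V1 = Matrix.reindex (Equiv.prodAssoc α β ε).symm (Equiv.refl _)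
        ((1 : Matrix α α ℂ) ⊗ₖ U1) *
      Matrix.reindex (Equiv.prodAssoc α φ δ) (Equiv.refl _) (A1 ⊗ₖ (1 : Matrix δ δ ℂ)))
    (hV2 : V2 = Matrix.reindex (Equiv.prodAssoc α β ε).symm (Equiv.refl _)
        ((1 : Matrix α α ℂ) ⊗ₖ U2) *
      Matrix.reindex (Equiv.prodAssoc α φ δ) (Equiv.refl _) (A2 ⊗ₖ (1 : Matrix δ δ ℂ)))
    (hU : U2ᴴ * U1 = 1) :
    V2ᴴ * (((X ⊗ₖ (1 : Matrix β β ℂ)) ⊗ₖ (1 : Matrix ε ε ℂ)) * V1) =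
      (A2ᴴ * (X ⊗ₖ (1 : Matrix φ φ ℂ)) * A1) ⊗ₖ (1 : Matrix δ δ ℂ) := by
  rw [core_calc X A1 A2 U1 U2 V1 V2 hV1 hV2, hU, kron_one_split X (p := φ) (q := δ),
    reindex_mul_reindex, reindex_mul_reindex, Matrix.reindex_refl_refl,
    ← Matrix.mul_kronecker_mul, Matrix.mul_one,
    ← Matrix.mul_kronecker_mul, Matrix.mul_one, ← Matrix.mul_assoc]

end core
/-- 'If' direction of the characterization of CP maps mapping an atomic algebra `𝒜` into
an atomic algebra `𝒞`: if `V = (P₀†⊗1)V₀ + Σ_{ij} (Pᵢ†⊗1)V_{ij}P_j` with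
`V_{ij} = (1 ⊗ U_{ij})(A_{ij} ⊗ 1)` and `U_{ik}†U_{il} = δ_{kl}1`, then
`Φ(Σᵢ Pᵢ†(X_{Aᵢ} ⊗ 1)Pᵢ) = Σⱼ P_j†[(Σᵢ A_{ij}†(X_{Aᵢ} ⊗ 1)A_{ij}) ⊗ 1]P_j`. -/
theorem stmt_4 {I J hA hC a0 e : Type*} [Fintype I] [DecidableEq I]
    [Fintype J] [DecidableEq J]
    [Fintype hA] [DecidableEq hA] [Fintype hC] [DecidableEq hC]
    [Fintype a0] [DecidableEq a0] [Fintype e] [DecidableEq e]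
    {Ai Bi : I → Type*} {Cj Dj : J → Type*} {F : I → J → Type*}
    [∀ i, Fintype (Ai i)] [∀ i, Fintype (Bi i)] [∀ j, Fintype (Cj j)] [∀ j, Fintype (Dj j)]
    [∀ i j, Fintype (F i j)]
    [∀ i, DecidableEq (Ai i)] [∀ i, DecidableEq (Bi i)]
    [∀ j, DecidableEq (Cj j)] [∀ j, DecidableEq (Dj j)] [∀ i j, DecidableEq (F i j)]
    (P0A : Matrix a0 hA ℂ) (PA : ∀ i, Matrix (Ai i × Bi i) hA ℂ)
    (PC : ∀ j, Matrix (Cj j × Dj j) hC ℂ)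
    (hPA : ∀ i, PA i * (PA i)ᴴ = 1)
    (hPA' : ∀ i i', i ≠ i' → PA i * (PA i')ᴴ = 0)
    (hPA0 : ∀ i, PA i * P0Aᴴ = 0)
    (V0 : Matrix (a0 × e) hC ℂ)
    (A : ∀ i j, Matrix (Ai i × F i j) (Cj j) ℂ)
    (U : ∀ i j, Matrix (Bi i × e) (F i j × Dj j) ℂ)
    (hUiso : ∀ i j, (U i j)ᴴ * U i j = 1)
    (hUorth : ∀ i k l, k ≠ l → (U i k)ᴴ * U i l = 0)
    (Vij : ∀ i j, Matrix ((Ai i × Bi i) × e) (Cj j × Dj j) ℂ)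
    (hVij : ∀ i j, Vij i j =
      Matrix.reindex (Equiv.prodAssoc (Ai i) (Bi i) e).symm (Equiv.refl (Ai i × (F i j × Dj j)))
          ((1 : Matrix (Ai i) (Ai i) ℂ) ⊗ₖ U i j) *
        Matrix.reindex (Equiv.prodAssoc (Ai i) (F i j) (Dj j)) (Equiv.refl (Cj j × Dj j))
          (A i j ⊗ₖ (1 : Matrix (Dj j) (Dj j) ℂ)))
    (V : Matrix (hA × e) hC ℂ)
    (hV : V = (P0Aᴴ ⊗ₖ (1 : Matrix e e ℂ)) * V0 +
      ∑ i, ∑ j, ((PA i)ᴴ ⊗ₖ (1 : Matrix e e ℂ)) * Vij i j * PC j) :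
    ∀ XA : (∀ i, Matrix (Ai i) (Ai i) ℂ),
      Vᴴ * ((∑ i, (PA i)ᴴ * (XA i ⊗ₖ (1 : Matrix (Bi i) (Bi i) ℂ)) * PA i) ⊗ₖ
            (1 : Matrix e e ℂ)) * V =
        ∑ j, (PC j)ᴴ *
          ((∑ i, (A i j)ᴴ * (XA i ⊗ₖ (1 : Matrix (F i j) (F i j) ℂ)) * A i j) ⊗ₖ
            (1 : Matrix (Dj j) (Dj j) ℂ)) * PC j := by
  intro XA
  have hP0PA : ∀ i, P0A * (PA i)ᴴ = 0 := fun i => by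
    have h := congrArg Matrix.conjTranspose (hPA0 i)
    rwa [Matrix.conjTranspose_mul, Matrix.conjTranspose_conjTranspose,
      Matrix.conjTranspose_zero] at h
  set K := ∑ i, (PA i)ᴴ * (XA i ⊗ₖ (1 : Matrix (Bi i) (Bi i) ℂ)) * PA i with hKdef
  have hKP : ∀ i, K * (PA i)ᴴ =
      (PA i)ᴴ * (XA i ⊗ₖ (1 : Matrix (Bi i) (Bi i) ℂ)) := by
    intro i
    rw [hKdef, Matrix.sum_mul,
      Finset.sum_eq_single i
        (fun b _ hb => by rw [Matrix.mul_assoc, hPA' b i hb, Matrix.mul_zero])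
        (fun h => absurd (Finset.mem_univ i) h),
      Matrix.mul_assoc, hPA i, Matrix.mul_one]
  have hK0 : K * P0Aᴴ = 0 := by
    rw [hKdef, Matrix.sum_mul]
    exact Finset.sum_eq_zero fun i _ => by rw [Matrix.mul_assoc, hPA0 i, Matrix.mul_zero]
  have hKV : (K ⊗ₖ (1 : Matrix e e ℂ)) * V =
      ∑ i, ∑ j, (((PA i)ᴴ * (XA i ⊗ₖ (1 : Matrix (Bi i) (Bi i) ℂ))) ⊗ₖ (1 : Matrix e e ℂ)) *
        (Vij i j * PC j) := by
    rw [hV, Matrix.mul_add]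
    have h0 : (K ⊗ₖ (1 : Matrix e e ℂ)) * ((P0Aᴴ ⊗ₖ (1 : Matrix e e ℂ)) * V0) = 0 := by
      rw [← Matrix.mul_assoc, ← Matrix.mul_kronecker_mul, hK0, Matrix.zero_kronecker,
        Matrix.zero_mul]
    rw [h0, zero_add, Matrix.mul_sum]
    refine Finset.sum_congr rfl fun i _ => ?_
    rw [Matrix.mul_sum]
    refine Finset.sum_congr rfl fun j _ => ?_
    rw [← Matrix.mul_assoc, ← Matrix.mul_assoc, ← Matrix.mul_kronecker_mul, hKP i,
      Matrix.one_mul, Matrix.mul_assoc]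
  have hVH : Vᴴ = V0ᴴ * (P0A ⊗ₖ (1 : Matrix e e ℂ)) +
      ∑ i, ∑ j, (PC j)ᴴ * ((Vij i j)ᴴ * (PA i ⊗ₖ (1 : Matrix e e ℂ))) := by
    rw [hV, Matrix.conjTranspose_add, Matrix.conjTranspose_mul, kron_conjT,
      Matrix.conjTranspose_one, Matrix.conjTranspose_conjTranspose, Matrix.conjTranspose_sum]
    congr 1
    refine Finset.sum_congr rfl fun i _ => ?_
    rw [Matrix.conjTranspose_sum]
    refine Finset.sum_congr rfl fun j _ => ?_
    rw [Matrix.conjTranspose_mul, Matrix.conjTranspose_mul, kron_conjT,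
      Matrix.conjTranspose_one, Matrix.conjTranspose_conjTranspose]
  rw [Matrix.mul_assoc, hKV, hVH, Matrix.add_mul]
  have hz : V0ᴴ * (P0A ⊗ₖ (1 : Matrix e e ℂ)) *
      (∑ i, ∑ j, (((PA i)ᴴ * (XA i ⊗ₖ (1 : Matrix (Bi i) (Bi i) ℂ))) ⊗ₖ (1 : Matrix e e ℂ)) *
        (Vij i j * PC j)) = 0 := by
    rw [Matrix.mul_sum]
    refine Finset.sum_eq_zero fun i _ => ?_
    rw [Matrix.mul_sum]
    refine Finset.sum_eq_zero fun j _ => ?_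
    rw [Matrix.mul_assoc V0ᴴ (P0A ⊗ₖ (1 : Matrix e e ℂ)),
      ← Matrix.mul_assoc (P0A ⊗ₖ (1 : Matrix e e ℂ))
        (((PA i)ᴴ * (XA i ⊗ₖ (1 : Matrix (Bi i) (Bi i) ℂ))) ⊗ₖ (1 : Matrix e e ℂ))
        (Vij i j * PC j),
      ← Matrix.mul_kronecker_mul,
      ← Matrix.mul_assoc P0A ((PA i)ᴴ) (XA i ⊗ₖ (1 : Matrix (Bi i) (Bi i) ℂ)),
      hP0PA i, Matrix.zero_mul, Matrix.zero_kronecker, Matrix.zero_mul, Matrix.mul_zero]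
  rw [hz, zero_add]
  have key : ∀ i' j' i j,
      (PC j')ᴴ * ((Vij i' j')ᴴ * (PA i' ⊗ₖ (1 : Matrix e e ℂ))) *
        ((((PA i)ᴴ * (XA i ⊗ₖ (1 : Matrix (Bi i) (Bi i) ℂ))) ⊗ₖ (1 : Matrix e e ℂ)) *
          (Vij i j * PC j)) =
      if i = i' ∧ j = j' then
        (PC j)ᴴ * ((((A i j)ᴴ * (XA i ⊗ₖ (1 : Matrix (F i j) (F i j) ℂ)) * A i j) ⊗ₖ
          (1 : Matrix (Dj j) (Dj j) ℂ)) * PC j)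
      else 0 := by
    intro i' j' i j
    rw [Matrix.mul_assoc, Matrix.mul_assoc ((Vij i' j')ᴴ)]
    by_cases hi : i = i'
    · subst hi
      have h1 : (PA i ⊗ₖ (1 : Matrix e e ℂ)) *
          ((((PA i)ᴴ * (XA i ⊗ₖ (1 : Matrix (Bi i) (Bi i) ℂ))) ⊗ₖ (1 : Matrix e e ℂ)) *
            (Vij i j * PC j)) =
          ((XA i ⊗ₖ (1 : Matrix (Bi i) (Bi i) ℂ)) ⊗ₖ (1 : Matrix e e ℂ)) *
            (Vij i j * PC j) := by
        rw [← Matrix.mul_assoc (PA i ⊗ₖ (1 : Matrix e e ℂ))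
            (((PA i)ᴴ * (XA i ⊗ₖ (1 : Matrix (Bi i) (Bi i) ℂ))) ⊗ₖ (1 : Matrix e e ℂ))
            (Vij i j * PC j),
          ← Matrix.mul_kronecker_mul,
          ← Matrix.mul_assoc (PA i) ((PA i)ᴴ) (XA i ⊗ₖ (1 : Matrix (Bi i) (Bi i) ℂ)),
          hPA i, Matrix.one_mul, Matrix.one_mul]
      rw [h1]
      by_cases hj : j = j'
      · subst hj
        rw [if_pos ⟨rfl, rfl⟩,
          ← Matrix.mul_assoc ((XA i ⊗ₖ (1 : Matrix (Bi i) (Bi i) ℂ)) ⊗ₖ (1 : Matrix e e ℂ))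
            (Vij i j) (PC j),
          ← Matrix.mul_assoc ((Vij i j)ᴴ)
            (((XA i ⊗ₖ (1 : Matrix (Bi i) (Bi i) ℂ)) ⊗ₖ (1 : Matrix e e ℂ)) * Vij i j)
            (PC j)]
        rw [core_one (XA i) (A i j) (A i j) (U i j) (U i j) (Vij i j) (Vij i j)
            (hVij i j) (hVij i j) (hUiso i j)]
      · rw [if_neg (fun h => hj h.2),
          ← Matrix.mul_assoc ((XA i ⊗ₖ (1 : Matrix (Bi i) (Bi i) ℂ)) ⊗ₖ (1 : Matrix e e ℂ))
            (Vij i j) (PC j),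
          ← Matrix.mul_assoc ((Vij i j')ᴴ)
            (((XA i ⊗ₖ (1 : Matrix (Bi i) (Bi i) ℂ)) ⊗ₖ (1 : Matrix e e ℂ)) * Vij i j)
            (PC j)]
        rw [core_zero (XA i) (A i j) (A i j') (U i j) (U i j') (Vij i j) (Vij i j')
            (hVij i j) (hVij i j') (hUorth i j' j fun h => hj h.symm),
          Matrix.zero_mul, Matrix.mul_zero]
    · rw [if_neg (fun h => hi h.1)]
      have h1 : (PA i' ⊗ₖ (1 : Matrix e e ℂ)) *
          ((((PA i)ᴴ * (XA i ⊗ₖ (1 : Matrix (Bi i) (Bi i) ℂ))) ⊗ₖ (1 : Matrix e e ℂ)) *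
            (Vij i j * PC j)) = 0 := by
        rw [← Matrix.mul_assoc (PA i' ⊗ₖ (1 : Matrix e e ℂ))
            (((PA i)ᴴ * (XA i ⊗ₖ (1 : Matrix (Bi i) (Bi i) ℂ))) ⊗ₖ (1 : Matrix e e ℂ))
            (Vij i j * PC j),
          ← Matrix.mul_kronecker_mul,
          ← Matrix.mul_assoc (PA i') ((PA i)ᴴ) (XA i ⊗ₖ (1 : Matrix (Bi i) (Bi i) ℂ)),
          hPA' i' i (fun h => hi h.symm), Matrix.zero_mul, Matrix.zero_kronecker,
          Matrix.zero_mul]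
      rw [h1, Matrix.mul_zero, Matrix.mul_zero]
  simp only [Matrix.sum_mul, Matrix.mul_sum]
  simp only [key]
  have collapse : ∀ i j,
      (∑ i', ∑ j', if i = i' ∧ j = j' then
        (PC j)ᴴ * ((((A i j)ᴴ * (XA i ⊗ₖ (1 : Matrix (F i j) (F i j) ℂ)) * A i j) ⊗ₖ
          (1 : Matrix (Dj j) (Dj j) ℂ)) * PC j) else 0) =
      (PC j)ᴴ * ((((A i j)ᴴ * (XA i ⊗ₖ (1 : Matrix (F i j) (F i j) ℂ)) * A i j) ⊗ₖ
          (1 : Matrix (Dj j) (Dj j) ℂ)) * PC j) := by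
    intro i j
    rw [Finset.sum_eq_single i
      (fun b _ hb => Finset.sum_eq_zero fun j' _ => if_neg (fun h => hb h.1.symm))
      (fun h => absurd (Finset.mem_univ i) h),
      Finset.sum_eq_single j
      (fun b _ hb => if_neg (fun h => hb h.2.symm))
      (fun h => absurd (Finset.mem_univ j) h),
      if_pos ⟨rfl, rfl⟩]
  calc (∑ i, ∑ j, ∑ i', ∑ j', if i = i' ∧ j = j' then
        (PC j)ᴴ * ((((A i j)ᴴ * (XA i ⊗ₖ (1 : Matrix (F i j) (F i j) ℂ)) * A i j) ⊗ₖ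
          (1 : Matrix (Dj j) (Dj j) ℂ)) * PC j) else 0)
      = ∑ i, ∑ j, (PC j)ᴴ *
          ((((A i j)ᴴ * (XA i ⊗ₖ (1 : Matrix (F i j) (F i j) ℂ)) * A i j) ⊗ₖ
            (1 : Matrix (Dj j) (Dj j) ℂ)) * PC j) :=
        Finset.sum_congr rfl fun i _ => Finset.sum_congr rfl fun j _ => collapse i j
    _ = ∑ j, ∑ i, (PC j)ᴴ *
          ((((A i j)ᴴ * (XA i ⊗ₖ (1 : Matrix (F i j) (F i j) ℂ)) * A i j) ⊗ₖ
            (1 : Matrix (Dj j) (Dj j) ℂ)) * PC j) := Finset.sum_comm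
    _ = ∑ j, (PC j)ᴴ *
          ((∑ i, (A i j)ᴴ * (XA i ⊗ₖ (1 : Matrix (F i j) (F i j) ℂ)) * A i j) ⊗ₖ
            (1 : Matrix (Dj j) (Dj j) ℂ)) * PC j := by
        refine Finset.sum_congr rfl fun j _ => ?_
        rw [sum_kron, Matrix.mul_sum, Matrix.sum_mul]
        exact Finset.sum_congr rfl fun i _ => (Matrix.mul_assoc _ _ _).symm
end

section
/- Let H = H_A ⊗ H_B and L(X) = V†(X ⊗ 1_E)V − K†X − XK with V ∈ L(H; H ⊗ H_E), K ∈ L(H). Suppose V = (1_A ⊗ U)(A ⊗ 1_B) + 1_A ⊗ B and K = (1_A ⊗ B†U)(A ⊗ 1_B) + (1/2)(1_A ⊗ B†B) + K_A ⊗ 1_B + i(1_A ⊗ H_B), where A ∈ L(H_A; H_A ⊗ H_F), U ∈ L(H_F ⊗ H_B; H_B ⊗ H_E) is an isometry, B ∈ L(H_B; H_B ⊗ H_E), K_A ∈ L(H_A), and H_B ∈ L(H_B) is self-adjoint. Then for every X_A ∈ L(H_A), L(X_A ⊗ 1_B) = [A†(X_A ⊗ 1_F)A − K_A†X_A − X_A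 K_A] ⊗ 1_B; in particular L leaves L(H_A) ⊗ 1_B invariant (L is semicausal). -/
open Matrix Kronecker

lemma kron_conjT_s7 {l m n p : Type*} (M : Matrix l m ℂ) (N : Matrix n p ℂ) :
    (M ⊗ₖ N)ᴴ = Mᴴ ⊗ₖ Nᴴ := by
  ext ⟨i,j⟩ ⟨k,l⟩
  simp [Matrix.conjTranspose_apply, mul_comm]

lemma sub_kron {l m n p : Type*} (M N : Matrix l m ℂ) (P : Matrix n p ℂ) :
    (M - N) ⊗ₖ P = M ⊗ₖ P - N ⊗ₖ P := by
  ext ⟨i,j⟩ ⟨k,l⟩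
  simp [sub_mul]

/-- 'If' direction of the characterization of semicausal GKLS generators: with
`V = (1_A ⊗ U)(A ⊗ 1_B) + 1_A ⊗ B` and
`K = (1_A ⊗ B†U)(A ⊗ 1_B) + ½ 1_A ⊗ B†B + K_A ⊗ 1_B + i 1_A ⊗ H_B`,
one has `L(X_A ⊗ 1_B) = [A†(X_A ⊗ 1_F)A − K_A†X_A − X_AK_A] ⊗ 1_B`. -/
theorem stmt_7 {hA hB e f : Type*} [Fintype hA] [Fintype hB] [Fintype e] [Fintype f]
    [DecidableEq hA] [DecidableEq hB] [DecidableEq e] [DecidableEq f]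
    (A : Matrix (hA × f) hA ℂ)
    (U : Matrix (hB × e) (f × hB) ℂ) (hU : Uᴴ * U = 1)
    (B : Matrix (hB × e) hB ℂ) (KA : Matrix hA hA ℂ)
    (HB : Matrix hB hB ℂ) (hHB : HBᴴ = HB)
    (V : Matrix ((hA × hB) × e) (hA × hB) ℂ)
    (hV : V = Matrix.reindex (Equiv.prodAssoc hA hB e).symm (Equiv.refl (hA × hB))
        (((1 : Matrix hA hA ℂ) ⊗ₖ U) *
            Matrix.reindex (Equiv.prodAssoc hA f hB) (Equiv.refl (hA × hB))
              (A ⊗ₖ (1 : Matrix hB hB ℂ)) +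
          (1 : Matrix hA hA ℂ) ⊗ₖ B))
    (K : Matrix (hA × hB) (hA × hB) ℂ)
    (hK : K = ((1 : Matrix hA hA ℂ) ⊗ₖ (Bᴴ * U)) *
          Matrix.reindex (Equiv.prodAssoc hA f hB) (Equiv.refl (hA × hB))
            (A ⊗ₖ (1 : Matrix hB hB ℂ)) +
        (1/2 : ℂ) • ((1 : Matrix hA hA ℂ) ⊗ₖ (Bᴴ * B)) +
        KA ⊗ₖ (1 : Matrix hB hB ℂ) +
        Complex.I • ((1 : Matrix hA hA ℂ) ⊗ₖ HB)) :
    ∀ XA : Matrix hA hA ℂ,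
      Vᴴ * ((XA ⊗ₖ (1 : Matrix hB hB ℂ)) ⊗ₖ (1 : Matrix e e ℂ)) * V -
          Kᴴ * (XA ⊗ₖ (1 : Matrix hB hB ℂ)) - (XA ⊗ₖ (1 : Matrix hB hB ℂ)) * K =
        (Aᴴ * (XA ⊗ₖ (1 : Matrix f f ℂ)) * A - KAᴴ * XA - XA * KA) ⊗ₖ
          (1 : Matrix hB hB ℂ) := by
  intro XA
  subst hV hK
  set P : Matrix (hA × (f × hB)) (hA × hB) ℂ :=
    Matrix.reindex (Equiv.prodAssoc hA f hB) (Equiv.refl (hA × hB))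
      (A ⊗ₖ (1 : Matrix hB hB ℂ)) with hP
  set W : Matrix (hA × (hB × e)) (hA × hB) ℂ :=
    ((1 : Matrix hA hA ℂ) ⊗ₖ U) * P + (1 : Matrix hA hA ℂ) ⊗ₖ B with hW
  -- Step A: remove the outer reindex
  have stepA : (Matrix.reindex (Equiv.prodAssoc hA hB e).symm (Equiv.refl (hA × hB)) W)ᴴ *
      ((XA ⊗ₖ (1 : Matrix hB hB ℂ)) ⊗ₖ (1 : Matrix e e ℂ)) *
      (Matrix.reindex (Equiv.prodAssoc hA hB e).symm (Equiv.refl (hA × hB)) W) =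
      Wᴴ * (XA ⊗ₖ (1 : Matrix (hB × e) (hB × e) ℂ)) * W := by
    have hM : ((XA ⊗ₖ (1 : Matrix hB hB ℂ)) ⊗ₖ (1 : Matrix e e ℂ)) =
        (XA ⊗ₖ (1 : Matrix (hB × e) (hB × e) ℂ)).submatrix
          (Equiv.prodAssoc hA hB e) (Equiv.prodAssoc hA hB e) := by
      rw [← Matrix.one_kronecker_one, ← Matrix.kronecker_assoc', Matrix.submatrix_submatrix]
      simp
    rw [Matrix.reindex_apply, hM]
    simp only [Equiv.symm_symm, Equiv.refl_symm, Equiv.coe_refl, Matrix.conjTranspose_submatrix,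
      Matrix.submatrix_mul_equiv, Matrix.submatrix_id_id]
  -- Step B: the P sandwich
  have stepB : Pᴴ * (XA ⊗ₖ (1 : Matrix (f × hB) (f × hB) ℂ)) * P =
      (Aᴴ * (XA ⊗ₖ (1 : Matrix f f ℂ)) * A) ⊗ₖ (1 : Matrix hB hB ℂ) := by
    have hM : (XA ⊗ₖ (1 : Matrix (f × hB) (f × hB) ℂ)) =
        ((XA ⊗ₖ (1 : Matrix f f ℂ)) ⊗ₖ (1 : Matrix hB hB ℂ)).submatrix
          (Equiv.prodAssoc hA f hB).symm (Equiv.prodAssoc hA f hB).symm := by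
      rw [← Matrix.one_kronecker_one, Matrix.kronecker_assoc']
    rw [hP, Matrix.reindex_apply, hM]
    simp only [Equiv.refl_symm, Equiv.coe_refl, Matrix.conjTranspose_submatrix,
      Matrix.submatrix_mul_equiv, Matrix.submatrix_id_id, kron_conjT_s7, Matrix.conjTranspose_one]
    rw [← Matrix.mul_kronecker_mul, ← Matrix.mul_kronecker_mul]
    simp
  -- pointwise kronecker products
  have hUXU : ((1 : Matrix hA hA ℂ) ⊗ₖ Uᴴ) * (XA ⊗ₖ (1 : Matrix (hB × e) (hB × e) ℂ)) *
      ((1 : Matrix hA hA ℂ) ⊗ₖ U) = XA ⊗ₖ (1 : Matrix (f × hB) (f × hB) ℂ) := by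
    rw [← Matrix.mul_kronecker_mul, ← Matrix.mul_kronecker_mul]
    simp [hU]
  have hUXB : ((1 : Matrix hA hA ℂ) ⊗ₖ Uᴴ) * (XA ⊗ₖ (1 : Matrix (hB × e) (hB × e) ℂ)) *
      ((1 : Matrix hA hA ℂ) ⊗ₖ B) = XA ⊗ₖ (Uᴴ * B) := by
    rw [← Matrix.mul_kronecker_mul, ← Matrix.mul_kronecker_mul]
    simp
  have hBXU : ((1 : Matrix hA hA ℂ) ⊗ₖ Bᴴ) * (XA ⊗ₖ (1 : Matrix (hB × e) (hB × e) ℂ)) *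
      ((1 : Matrix hA hA ℂ) ⊗ₖ U) = XA ⊗ₖ (Bᴴ * U) := by
    rw [← Matrix.mul_kronecker_mul, ← Matrix.mul_kronecker_mul]
    simp
  have hBXB : ((1 : Matrix hA hA ℂ) ⊗ₖ Bᴴ) * (XA ⊗ₖ (1 : Matrix (hB × e) (hB × e) ℂ)) *
      ((1 : Matrix hA hA ℂ) ⊗ₖ B) = XA ⊗ₖ (Bᴴ * B) := by
    rw [← Matrix.mul_kronecker_mul, ← Matrix.mul_kronecker_mul]
    simp
  -- e1: the V-part
  have hUXU' : ((1 : Matrix hA hA ℂ) ⊗ₖ Uᴴ) * ((XA ⊗ₖ (1 : Matrix (hB × e) (hB × e) ℂ)) *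
      (((1 : Matrix hA hA ℂ) ⊗ₖ U) * P)) = (XA ⊗ₖ (1 : Matrix (f × hB) (f × hB) ℂ)) * P := by
    rw [← Matrix.mul_assoc, ← Matrix.mul_assoc, hUXU]
  have hUXB' : ((1 : Matrix hA hA ℂ) ⊗ₖ Uᴴ) * ((XA ⊗ₖ (1 : Matrix (hB × e) (hB × e) ℂ)) *
      ((1 : Matrix hA hA ℂ) ⊗ₖ B)) = XA ⊗ₖ (Uᴴ * B) := by
    rw [← Matrix.mul_assoc, hUXB]
  have hBXU' : ((1 : Matrix hA hA ℂ) ⊗ₖ Bᴴ) * ((XA ⊗ₖ (1 : Matrix (hB × e) (hB × e) ℂ)) *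
      (((1 : Matrix hA hA ℂ) ⊗ₖ U) * P)) = (XA ⊗ₖ (Bᴴ * U)) * P := by
    rw [← Matrix.mul_assoc, ← Matrix.mul_assoc, hBXU]
  have hBXB' : ((1 : Matrix hA hA ℂ) ⊗ₖ Bᴴ) * ((XA ⊗ₖ (1 : Matrix (hB × e) (hB × e) ℂ)) *
      ((1 : Matrix hA hA ℂ) ⊗ₖ B)) = XA ⊗ₖ (Bᴴ * B) := by
    rw [← Matrix.mul_assoc, hBXB]
  have hPXP : Pᴴ * ((XA ⊗ₖ (1 : Matrix (f × hB) (f × hB) ℂ)) * P) =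
      (Aᴴ * (XA ⊗ₖ (1 : Matrix f f ℂ)) * A) ⊗ₖ (1 : Matrix hB hB ℂ) := by
    rw [← Matrix.mul_assoc, stepB]
  have e1 : Wᴴ * (XA ⊗ₖ (1 : Matrix (hB × e) (hB × e) ℂ)) * W =
      (Aᴴ * (XA ⊗ₖ (1 : Matrix f f ℂ)) * A) ⊗ₖ (1 : Matrix hB hB ℂ) +
        Pᴴ * (XA ⊗ₖ (Uᴴ * B)) + (XA ⊗ₖ (Bᴴ * U)) * P + XA ⊗ₖ (Bᴴ * B) := by
    conv_lhs =>
      rw [hW]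
      simp only [Matrix.conjTranspose_add, Matrix.conjTranspose_mul, kron_conjT_s7,
        Matrix.conjTranspose_one, Matrix.add_mul, Matrix.mul_add, Matrix.mul_assoc]
      rw [hUXU', hUXB', hBXU', hBXB', hPXP]
    abel
  -- e2: Kᴴ * (XA ⊗ 1)
  have e2 : (((1 : Matrix hA hA ℂ) ⊗ₖ (Bᴴ * U)) * P +
        (1/2 : ℂ) • ((1 : Matrix hA hA ℂ) ⊗ₖ (Bᴴ * B)) +
        KA ⊗ₖ (1 : Matrix hB hB ℂ) +
        Complex.I • ((1 : Matrix hA hA ℂ) ⊗ₖ HB))ᴴ * (XA ⊗ₖ (1 : Matrix hB hB ℂ)) =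
      Pᴴ * (XA ⊗ₖ (Uᴴ * B)) + (1/2 : ℂ) • (XA ⊗ₖ (Bᴴ * B)) +
        (KAᴴ * XA) ⊗ₖ (1 : Matrix hB hB ℂ) - Complex.I • (XA ⊗ₖ HB) := by
    simp only [Matrix.conjTranspose_add, Matrix.conjTranspose_smul, Matrix.conjTranspose_mul,
      kron_conjT_s7, Matrix.conjTranspose_one, Matrix.conjTranspose_conjTranspose, hHB,
      Complex.star_def, Complex.conj_I, map_div₀, _root_.map_one, map_ofNat]
    rw [Matrix.add_mul, Matrix.add_mul, Matrix.add_mul, Matrix.smul_mul, Matrix.smul_mul,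
      Matrix.mul_assoc, ← Matrix.mul_kronecker_mul, ← Matrix.mul_kronecker_mul,
      ← Matrix.mul_kronecker_mul, ← Matrix.mul_kronecker_mul]
    simp only [Matrix.one_mul, Matrix.mul_one, neg_smul, smul_smul, neg_mul, one_mul]
    rw [sub_eq_add_neg, ← neg_smul]
  -- e3: (XA ⊗ 1) * K
  have e3 : (XA ⊗ₖ (1 : Matrix hB hB ℂ)) * (((1 : Matrix hA hA ℂ) ⊗ₖ (Bᴴ * U)) * P +
        (1/2 : ℂ) • ((1 : Matrix hA hA ℂ) ⊗ₖ (Bᴴ * B)) +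
        KA ⊗ₖ (1 : Matrix hB hB ℂ) +
        Complex.I • ((1 : Matrix hA hA ℂ) ⊗ₖ HB)) =
      (XA ⊗ₖ (Bᴴ * U)) * P + (1/2 : ℂ) • (XA ⊗ₖ (Bᴴ * B)) +
        (XA * KA) ⊗ₖ (1 : Matrix hB hB ℂ) + Complex.I • (XA ⊗ₖ HB) := by
    rw [Matrix.mul_add, Matrix.mul_add, Matrix.mul_add, Matrix.mul_smul, Matrix.mul_smul,
      ← Matrix.mul_assoc, ← Matrix.mul_kronecker_mul, ← Matrix.mul_kronecker_mul,
      ← Matrix.mul_kronecker_mul, ← Matrix.mul_kronecker_mul]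
    simp only [Matrix.one_mul, Matrix.mul_one]
  rw [stepA, e1, e2, e3, sub_kron, sub_kron]
  module
end

section
/- Let C ⊆ L(H) be a maximal abelian atomic von Neumann subalgebra, so C = {Σ_i c_i |p_i⟩⟨p_i| : sup_i |c_i| < ∞} for an orthonormal basis {|p_i⟩}_{i∈I} of H. Let V = Σ_{i,j∈I} |p_i⟩⟨p_j| ⊗ |ψ_{ij}⟩ ∈ L(H; H ⊗ H_E) with vectors ψ_{ij} ∈ H_E satisfying ⟨ψ_{ij}|ψ_{ik}⟩ = 0 whenever j ≠ k, and let Φ(X) = V†(X ⊗ 1_E)V. Then Φ(C) ⊆ C; explicitly, Φ(Σ_i c_i |p_i⟩⟨p_i|) = Σ_j (Σ_i c_i ‖ψ_{ij}‖²) |p_j⟩⟨p_j|. -/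
open Matrix Kronecker

/-- For `V = Σ_{i,j} |p_i⟩⟨p_j| ⊗ |ψ_{ij}⟩` with `⟨ψ_{ij}|ψ_{ik}⟩ = 0` for `j ≠ k`,
the CP map `Φ(X) = V†(X ⊗ 1_E)V` leaves the maximal abelian algebra of diagonal
operators invariant: `Φ(Σ_i c_i |p_i⟩⟨p_i|) = Σ_j (Σ_i c_i ‖ψ_{ij}‖²)|p_j⟩⟨p_j|`. -/
theorem stmt_8 {ι e : Type*} [Fintype ι] [Fintype e] [DecidableEq ι] [DecidableEq e]
    (ψ : ι → ι → e → ℂ)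
    (horth : ∀ i j k, j ≠ k → ∑ n, star (ψ i j n) * ψ i k n = 0)
    (V : Matrix (ι × e) ι ℂ)
    (hV : V = Matrix.of (fun p j => ψ p.1 j p.2 : ι × e → ι → ℂ)) :
    ∀ c : ι → ℂ,
      Vᴴ * (Matrix.diagonal c ⊗ₖ (1 : Matrix e e ℂ)) * V =
        Matrix.diagonal (fun j => ∑ i, c i * ∑ n, star (ψ i j n) * ψ i j n) := by
  intro c
  subst hV
  ext j k
  simp only [Matrix.mul_apply, Matrix.conjTranspose_apply, Matrix.kroneckerMap_apply,
    Matrix.diagonal_apply, Matrix.one_apply, Matrix.of_apply]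
  rw [Fintype.sum_prod_type]
  have key : ∀ i : ι, ∑ n : e,
      (∑ x : ι × e, star (ψ x.1 j x.2) *
        ((if x.1 = i then c x.1 else 0) * if x.2 = n then 1 else 0)) * ψ i k n
      = c i * ∑ n, star (ψ i j n) * ψ i k n := by
    intro i
    rw [Finset.mul_sum]
    refine Finset.sum_congr rfl fun n _ => ?_
    rw [Fintype.sum_prod_type]
    rw [Finset.sum_eq_single i]
    · rw [Finset.sum_eq_single n]
      · simp; ring
      · intro b _ hb; simp [hb]
      · simp
    · intro b _ hb; simp [hb]
    · simp
  calc ∑ x : ι, ∑ y : e,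
        (∑ z : ι × e, star (ψ z.1 j z.2) *
          ((if z.1 = x then c z.1 else 0) * if z.2 = y then 1 else 0)) * ψ x k y
      = ∑ i : ι, c i * ∑ n, star (ψ i j n) * ψ i k n :=
        Finset.sum_congr rfl (fun i _ => key i)
    _ = _ := ?_
  by_cases h : j = k
  · subst h; simp
  · simp only [if_neg h]
    refine Finset.sum_eq_zero fun i _ => ?_
    rw [horth i j k h, mul_zero]
end

section
/- Let H be finite-dimensional, {|p_i⟩}_{i∈I} an orthonormal basis, and φ_n = Σ_{i,j} ⟨e_n|ψ_{ij}⟩ |p_i⟩⟨p_j| Kraus operators built from vectors ψ_{ij} ∈ H_E with ⟨ψ_{ij}|ψ_{ik}⟩ = 0 for j ≠ k, where {|e_n⟩}_{n∈N} is an orthonormal basis of H_E. Then for every c = Σ_i c_i |p_i⟩⟨p_i| in the maximal abelian algebra C there exist c_{mn} ∈ C with: (1) replacing c by c† replaces c_{mn} by c_{nm}†, and (2) [c, φ_m] = Σ_n c_{mn} φ_n for all m. -/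
open Matrix

/-- Fagnola–Skeide criterion recovered: for Kraus operators
`φ_n = Σ_{i,j} ⟨e_n|ψ_{ij}⟩ |p_i⟩⟨p_j|` built from vectors with `⟨ψ_{ij}|ψ_{ik}⟩ = 0`
for `j ≠ k`, every diagonal `c` admits diagonal operators `c_{mn}` with
`c_{mn}(c†) = c_{nm}(c)†` and `[c, φ_m] = Σ_n c_{mn} φ_n`. -/
theorem stmt_9 {ι e : Type*} [Fintype ι] [Fintype e] [DecidableEq ι] [DecidableEq e]
    (ψ : ι → ι → e → ℂ)
    (horth : ∀ i j k, j ≠ k → ∑ n, star (ψ i j n) * ψ i k n = 0)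
    (φ : e → Matrix ι ι ℂ)
    (hφ : ∀ n, φ n = Matrix.of (fun i j => ψ i j n : ι → ι → ℂ)) :
    ∃ F : (ι → ℂ) → e → e → ι → ℂ,
      (∀ (c : ι → ℂ) (m n : e) (i : ι),
          F (fun k => star (c k)) m n i = star (F c n m i)) ∧
      (∀ (c : ι → ℂ) (m : e),
          Matrix.diagonal c * φ m - φ m * Matrix.diagonal c =
            ∑ n, Matrix.diagonal (F c m n) * φ n) := by
  classical
  set N : ι → ι → ℂ := fun i j => ∑ n, star (ψ i j n) * ψ i j n with hNdef
  have hNzero : ∀ i j, N i j = 0 → ∀ n, ψ i j n = 0 := by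
    intro i j h n
    have h2 : ∑ n, (Complex.normSq (ψ i j n) : ℂ) = 0 := by
      rw [← h]
      simp [hNdef, Complex.star_def, Complex.normSq_eq_conj_mul_self]
    have h3 : ∑ n, Complex.normSq (ψ i j n) = 0 := by exact_mod_cast h2
    have h4 := (Finset.sum_eq_zero_iff_of_nonneg
      (fun n _ => Complex.normSq_nonneg (ψ i j n))).mp h3 n (Finset.mem_univ n)
    exact Complex.normSq_eq_zero.mp h4
  have hNstar : ∀ i j, star (N i j) = N i j := by
    intro i j
    simp only [hNdef, star_sum, StarMul.star_mul, star_star]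
  refine ⟨fun c m n i => ∑ j, (c i - c j) * ψ i j m * star (ψ i j n) / N i j, ?_, ?_⟩
  · intro c m n i
    dsimp only
    rw [star_sum]
    refine Finset.sum_congr rfl fun j _ => ?_
    rw [star_div₀, hNstar]
    simp only [StarMul.star_mul, star_sub, star_star]
    ring
  · intro c m
    ext i j
    simp only [Matrix.sub_apply, Matrix.sum_apply, hφ, Matrix.diagonal_mul,
      Matrix.mul_diagonal, Matrix.of_apply]
    have hswap : ∑ n, (∑ k, (c i - c k) * ψ i k m * star (ψ i k n) / N i k) * ψ i j n
        = ∑ k, ((c i - c k) * ψ i k m / N i k) * ∑ n, star (ψ i k n) * ψ i j n := by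
      simp only [Finset.sum_mul]
      rw [Finset.sum_comm]
      refine Finset.sum_congr rfl fun k _ => ?_
      rw [Finset.mul_sum]
      refine Finset.sum_congr rfl fun n _ => ?_
      ring
    rw [hswap]
    rw [Finset.sum_eq_single j]
    · by_cases hN : N i j = 0
      · rw [hNzero i j hN m]
        simp [hN]
      · rw [show (∑ n, star (ψ i j n) * ψ i j n) = N i j from rfl,
          div_mul_cancel₀ _ hN]
        ring
    · intro k _ hk
      rw [horth i k j hk, mul_zero]
    · intro h; exact absurd (Finset.mem_univ j) h
end

section
/- Let V, Ṽ ∈ L(H; H ⊗ H_E) and suppose (X ⊗ 1_E)Ṽ − ṼX = (X ⊗ 1_E)V − VX for all X ∈ L(H). Then there exists a vector |φ⟩ ∈ H_E such that Ṽ = V + 1_H ⊗ |φ⟩ (i.e., Ṽ − V = the map ψ ↦ ψ ⊗ φ). -/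
open Matrix Kronecker

/-!
Put `D = Ṽ - V`, so that `(X ⊗ 1) D = D X` for all `X`. Testing this against the matrix units
`E_ii` shows that `D (i, k) j = 0` for `i ≠ j`, and testing it against `E_ij` shows that the
diagonal entries `D (i, k) i` do not depend on `i`; they are the components of `φ`.
-/

namespace Matrix

variable {h e R : Type*} [Fintype h] [Fintype e] [DecidableEq h] [DecidableEq e] [Semiring R]

/-- `1_H ⊗ |φ⟩`, the map `ψ ↦ ψ ⊗ φ`. -/
def idTensorVec (φ : e → R) : Matrix (h × e) h R :=
  of fun p j => if p.1 = j then φ p.2 else 0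

theorem single_kronecker_one_mul_apply {n : Type*} (a b : h) (c : R) (D : Matrix (h × e) n R)
    (i : h) (k : e) (j : n) :
    ((single a b c ⊗ₖ (1 : Matrix e e R)) * D) (i, k) j = if i = a then c * D (b, k) j else 0 := by
  by_cases hia : i = a
  · subst hia
    simp [mul_apply, Fintype.sum_prod_type, single, one_apply]
  · simp [mul_apply, single, hia, Ne.symm hia]

section Intertwiner

variable {D : Matrix (h × e) h R} (hD : ∀ X : Matrix h h R, (X ⊗ₖ (1 : Matrix e e R)) * D = D * X)
include hD

theorem apply_eq_zero_of_forall_kronecker_one_mul_eq {i j : h} (hij : i ≠ j) (k : e) :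
    D (i, k) j = 0 := by
  simpa [single_kronecker_one_mul_apply, Ne.symm hij] using congrFun₂ (hD (single i i 1)) (i, k) j

theorem apply_diag_eq_of_forall_kronecker_one_mul_eq (i j : h) (k : e) :
    D (i, k) i = D (j, k) j := by
  simpa [single_kronecker_one_mul_apply] using (congrFun₂ (hD (single i j 1)) (i, k) j).symm

theorem exists_eq_idTensorVec_of_forall_kronecker_one_mul_eq :
    ∃ φ : e → R, D = idTensorVec φ := by
  rcases isEmpty_or_nonempty h with _ | ⟨⟨i₀⟩⟩
  · exact ⟨0, Subsingleton.elim _ _⟩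
  refine ⟨fun k => D (i₀, k) i₀, ?_⟩
  ext ⟨i, k⟩ j
  by_cases hij : i = j
  · subst hij
    simp [idTensorVec, apply_diag_eq_of_forall_kronecker_one_mul_eq hD i i₀]
  · simp [idTensorVec, hij, apply_eq_zero_of_forall_kronecker_one_mul_eq hD hij]

end Intertwiner

end Matrix

/-- If `(X ⊗ 1_E)Ṽ − ṼX = (X ⊗ 1_E)V − VX` for all `X ∈ L(H)`, then `Ṽ = V + 1_H ⊗ |φ⟩`
for some vector `φ ∈ H_E`. -/
theorem stmt_12 {h e : Type*} [Fintype h] [Fintype e] [DecidableEq h] [DecidableEq e]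
    (V V' : Matrix (h × e) h ℂ)
    (hVV' : ∀ X : Matrix h h ℂ,
      (X ⊗ₖ (1 : Matrix e e ℂ)) * V' - V' * X = (X ⊗ₖ (1 : Matrix e e ℂ)) * V - V * X) :
    ∃ φ : e → ℂ,
      V' = V + Matrix.of (fun p j => if p.1 = j then φ p.2 else 0 : h × e → h → ℂ) := by
  have hD : ∀ X : Matrix h h ℂ, (X ⊗ₖ (1 : Matrix e e ℂ)) * (V' - V) = (V' - V) * X := by
    intro X
    rw [Matrix.mul_sub, Matrix.sub_mul, sub_eq_sub_iff_sub_eq_sub]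
    exact hVV' X
  obtain ⟨φ, hφ⟩ := exists_eq_idTensorVec_of_forall_kronecker_one_mul_eq hD
  exact ⟨φ, by rw [← sub_eq_iff_eq_add', hφ, idTensorVec]⟩
end

section
/- Let L(X) = V†(X ⊗ 1_E)V − K†X − XK and L̃(X) = Ṽ†(X ⊗ 1_Ẽ)Ṽ − K̃†X − XK̃ with Ṽ = (1 ⊗ W)V + 1 ⊗ |ψ̃⟩ for an isometry W ∈ L(H_E; H_Ẽ), a vector ψ̃ ∈ H_Ẽ, and K̃ = K + (1 ⊗ ⟨ψ̃|W)V + (1/2)‖ψ̃‖²·1 + iμ·1 with μ ∈ ℝ. Then L(X) = L̃(X) for all X ∈ L(H). -/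
open Matrix Kronecker

lemma kron_ct {l m n p : Type*} (A : Matrix l m ℂ) (B : Matrix n p ℂ) :
    (A ⊗ₖ B)ᴴ = Aᴴ ⊗ₖ Bᴴ := by
  ext ⟨i, j⟩ ⟨k, r⟩
  simp [Matrix.conjTranspose_apply, kroneckerMap_apply, mul_comm]

/-- Sufficiency of the transformation freedom in the GKLS uniqueness theorem: if
`Ṽ = (1 ⊗ W)V + 1 ⊗ |ψ̃⟩` for an isometry `W` and
`K̃ = K + (1 ⊗ ⟨ψ̃|W)V + ½‖ψ̃‖²·1 + iμ·1`, then the two generators agree. -/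
theorem stmt_13 {h e e' : Type*} [Fintype h] [Fintype e] [Fintype e']
    [DecidableEq h] [DecidableEq e] [DecidableEq e']
    (V : Matrix (h × e) h ℂ) (K : Matrix h h ℂ)
    (W : Matrix e' e ℂ) (hW : Wᴴ * W = 1)
    (ψ : e' → ℂ) (μ : ℝ)
    (Eψ : Matrix (h × e') h ℂ)
    (hEψ : Eψ = Matrix.of (fun p j => if p.1 = j then ψ p.2 else 0 : h × e' → h → ℂ))
    (V' : Matrix (h × e') h ℂ)
    (hV' : V' = ((1 : Matrix h h ℂ) ⊗ₖ W) * V + Eψ)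
    (K' : Matrix h h ℂ)
    (hK' : K' = K + Eψᴴ * (((1 : Matrix h h ℂ) ⊗ₖ W) * V) +
        ((1/2 : ℂ) * ∑ n, star (ψ n) * ψ n) • (1 : Matrix h h ℂ) +
        ((μ : ℂ) * Complex.I) • (1 : Matrix h h ℂ)) :
    ∀ X : Matrix h h ℂ,
      Vᴴ * (X ⊗ₖ (1 : Matrix e e ℂ)) * V - Kᴴ * X - X * K =
      V'ᴴ * (X ⊗ₖ (1 : Matrix e' e' ℂ)) * V' - K'ᴴ * X - X * K' := by
  intro X
  set A : Matrix (h × e') (h × e) ℂ := (1 : Matrix h h ℂ) ⊗ₖ W with hA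
  have hcomm : ∀ X : Matrix h h ℂ, (X ⊗ₖ (1 : Matrix e' e' ℂ)) * Eψ = Eψ * X := by
    intro X
    subst hEψ
    ext ⟨i, n⟩ k
    simp [Matrix.mul_apply, kroneckerMap_apply, Fintype.sum_prod_type, ite_and,
      Matrix.one_apply, mul_ite, mul_zero, mul_one, Finset.sum_ite_eq, mul_comm]
  have hEE : Eψᴴ * Eψ = (∑ n, star (ψ n) * ψ n) • (1 : Matrix h h ℂ) := by
    subst hEψ
    ext i j
    simp only [Matrix.mul_apply, Matrix.conjTranspose_apply, Fintype.sum_prod_type,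
      Matrix.smul_apply, Matrix.one_apply, Matrix.of_apply, smul_eq_mul]
    by_cases hij : i = j
    · subst hij; simp [mul_comm]
    · simp [hij, Ne.symm hij]
  have hWXW : Aᴴ * ((X ⊗ₖ (1 : Matrix e' e' ℂ)) * (A * V)) =
      (X ⊗ₖ (1 : Matrix e e ℂ)) * V := by
    rw [hA, kron_ct, Matrix.conjTranspose_one, ← Matrix.mul_assoc, ← Matrix.mul_assoc,
      ← mul_kronecker_mul, ← mul_kronecker_mul]
    simp [hW]
  have hEX : ∀ X : Matrix h h ℂ, Eψᴴ * (X ⊗ₖ (1 : Matrix e' e' ℂ)) = X * Eψᴴ := by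
    intro X
    have := congrArg Matrix.conjTranspose (hcomm Xᴴ)
    simpa [kron_ct, Matrix.conjTranspose_mul, Matrix.mul_assoc] using this
  have h2 : Eψᴴ * ((X ⊗ₖ (1 : Matrix e' e' ℂ)) * (A * V)) = X * (Eψᴴ * (A * V)) := by
    rw [← Matrix.mul_assoc, hEX, Matrix.mul_assoc]
  have h3 : (X ⊗ₖ (1 : Matrix e' e' ℂ)) * Eψ = Eψ * X := hcomm X
  have h4 : Eψᴴ * ((X ⊗ₖ (1 : Matrix e' e' ℂ)) * Eψ) =
      (∑ n, star (ψ n) * ψ n) • X := by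
    rw [← Matrix.mul_assoc, hEX, Matrix.mul_assoc, hEE, Matrix.mul_smul, Matrix.mul_one]
  subst hV' hK'
  have hstar1 : star ((μ : ℂ) * Complex.I) = -((μ:ℂ) * Complex.I) := by
    simp [Complex.ext_iff]
  have hstar2 : star ((1/2 : ℂ) * ∑ n, star (ψ n) * ψ n) =
      (1/2 : ℂ) * ∑ n, star (ψ n) * ψ n := by
    simp [star_sum, mul_comm]
  simp only [Matrix.conjTranspose_add, Matrix.conjTranspose_mul, Matrix.conjTranspose_smul,
    Matrix.conjTranspose_one, Matrix.add_mul, Matrix.mul_add, Matrix.smul_mul, Matrix.mul_smul,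
    Matrix.one_mul, Matrix.mul_one, Matrix.conjTranspose_conjTranspose, Matrix.mul_assoc,
    hstar1, hstar2]
  rw [hWXW, h2, h4, h3]
  module
end

section
/- Let Φ be a unital completely positive map on L(H) with H finite-dimensional, and define Ψ(X, Y, Z) := Φ(Y†XZ) − Y†Φ(XZ) − Φ(Y†X)Z + Y†Φ(X)Z for X, Y, Z ∈ L(H). If Φ(X) = V†(X ⊗ 1_E)V with V ∈ L(H; H ⊗ H_E), then Ψ(X, Y, Z) = [VY − (Y ⊗ 1_E)V]†(X ⊗ 1_E)[VZ − (Z ⊗ 1_E)V]. Consequently, for every X ≥ 0 and every Y, the operator Ψ(X, Y, Y) is positive semidefinite. -/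
open Matrix Kronecker
open scoped ComplexOrder

/-! The Stinespring form `Φ(X) = V†(X ⊗ 1)V` factors through the multiplicative map
`X ↦ X ⊗ 1`, so each of the four terms of `Ψ(X,Y,Z)` is `A† (X ⊗ 1) B` with `A ∈ {VY, (Y ⊗ 1)V}`
and `B ∈ {VZ, (Z ⊗ 1)V}`, and they assemble into `[VY − (Y ⊗ 1)V]† (X ⊗ 1) [VZ − (Z ⊗ 1)V]`.
For `Z = Y` this is a congruence of the positive matrix `X ⊗ 1`. -/

namespace Matrix

variable {R : Type*} {n p : Type*} [Fintype n] [Fintype p] [DecidableEq p]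

def stinespringMap [CommRing R] [StarRing R] (V : Matrix (n × p) n R) (X : Matrix n n R) :
    Matrix n n R :=
  Vᴴ * (X ⊗ₖ (1 : Matrix p p R)) * V

def multiplicativeDefect [Ring R] [StarRing R] (Φ : Matrix n n R → Matrix n n R)
    (X Y Z : Matrix n n R) : Matrix n n R :=
  Φ (Yᴴ * X * Z) - Yᴴ * Φ (X * Z) - Φ (Yᴴ * X) * Z + Yᴴ * Φ X * Z

theorem kronecker_one_mul_kronecker_one [CommRing R] (A B : Matrix n n R) :
    (A ⊗ₖ (1 : Matrix p p R)) * (B ⊗ₖ (1 : Matrix p p R))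
      = (A * B) ⊗ₖ (1 : Matrix p p R) := by
  rw [← mul_kronecker_mul, one_mul]

theorem multiplicativeDefect_stinespringMap [CommRing R] [StarRing R] (V : Matrix (n × p) n R)
    (X Y Z : Matrix n n R) :
    multiplicativeDefect (stinespringMap V) X Y Z =
      (V * Y - (Y ⊗ₖ (1 : Matrix p p R)) * V)ᴴ * (X ⊗ₖ (1 : Matrix p p R)) *
        (V * Z - (Z ⊗ₖ (1 : Matrix p p R)) * V) := by
  simp only [multiplicativeDefect, stinespringMap, conjTranspose_sub, conjTranspose_mul,
    conjTranspose_kronecker, conjTranspose_one, ← kronecker_one_mul_kronecker_one,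
    Matrix.sub_mul, Matrix.mul_sub, Matrix.mul_assoc]
  abel

theorem posSemidef_multiplicativeDefect_stinespringMap {𝕜 : Type*} [RCLike 𝕜]
    (V : Matrix (n × p) n 𝕜) {X : Matrix n n 𝕜} (hX : X.PosSemidef) (Y : Matrix n n 𝕜) :
    (multiplicativeDefect (stinespringMap V) X Y Y).PosSemidef := by
  rw [multiplicativeDefect_stinespringMap]
  exact (hX.kronecker .one).conjTranspose_mul_mul_same _

end Matrix

theorem stmt_14_general {h e : Type*} [Fintype h] [Fintype e] [DecidableEq e]
    (V : Matrix (h × e) h ℂ)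
    (Φ : Matrix h h ℂ → Matrix h h ℂ)
    (hΦ : ∀ X, Φ X = Vᴴ * (X ⊗ₖ (1 : Matrix e e ℂ)) * V)
    (Ψ : Matrix h h ℂ → Matrix h h ℂ → Matrix h h ℂ → Matrix h h ℂ)
    (hΨ : ∀ X Y Z, Ψ X Y Z = Φ (Yᴴ * X * Z) - Yᴴ * Φ (X * Z) - Φ (Yᴴ * X) * Z + Yᴴ * Φ X * Z) :
    (∀ X Y Z : Matrix h h ℂ,
        Ψ X Y Z = (V * Y - (Y ⊗ₖ (1 : Matrix e e ℂ)) * V)ᴴ * (X ⊗ₖ (1 : Matrix e e ℂ)) *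
          (V * Z - (Z ⊗ₖ (1 : Matrix e e ℂ)) * V)) ∧
      ∀ X Y : Matrix h h ℂ, X.PosSemidef → (Ψ X Y Y).PosSemidef := by
  obtain rfl : Φ = stinespringMap V := funext hΦ
  obtain rfl : Ψ = multiplicativeDefect (stinespringMap V) := by
    funext X Y Z; exact hΨ X Y Z
  exact ⟨multiplicativeDefect_stinespringMap V,
    fun X Y hX => posSemidef_multiplicativeDefect_stinespringMap V hX Y⟩

/-- For a unital CP map `Φ(X) = V†(X ⊗ 1_E)V`, the combination
`Ψ(X,Y,Z) = Φ(Y†XZ) − Y†Φ(XZ) − Φ(Y†X)Z + Y†Φ(X)Z` equals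
`[VY − (Y⊗1)V]†(X⊗1)[VZ − (Z⊗1)V]`; consequently `Ψ(X,Y,Y)` is positive semidefinite
whenever `X ≥ 0`. -/
theorem stmt_14 {h e : Type*} [Fintype h] [Fintype e] [DecidableEq h] [DecidableEq e]
    (V : Matrix (h × e) h ℂ)
    (hunital : Vᴴ * (((1 : Matrix h h ℂ)) ⊗ₖ (1 : Matrix e e ℂ)) * V = 1)
    (Φ : Matrix h h ℂ → Matrix h h ℂ)
    (hΦ : ∀ X, Φ X = Vᴴ * (X ⊗ₖ (1 : Matrix e e ℂ)) * V)
    (Ψ : Matrix h h ℂ → Matrix h h ℂ → Matrix h h ℂ → Matrix h h ℂ)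
    (hΨ : ∀ X Y Z, Ψ X Y Z = Φ (Yᴴ * X * Z) - Yᴴ * Φ (X * Z) - Φ (Yᴴ * X) * Z + Yᴴ * Φ X * Z) :
    (∀ X Y Z : Matrix h h ℂ,
        Ψ X Y Z = (V * Y - (Y ⊗ₖ (1 : Matrix e e ℂ)) * V)ᴴ * (X ⊗ₖ (1 : Matrix e e ℂ)) *
          (V * Z - (Z ⊗ₖ (1 : Matrix e e ℂ)) * V)) ∧
      ∀ X Y : Matrix h h ℂ, X.PosSemidef → (Ψ X Y Y).PosSemidef :=
  stmt_14_general V Φ hΦ Ψ hΨ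
end
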